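/- For all positive integers α₁, α₂, α₃ and all n ≥ 0, the number |P(n,2)| of permutations of n elements generated by 2 stacks in series is at most the coefficient of x^{n(α₁+α₂+α₃)} in the formal power series (1 − x^{α₁} − x^{α₂} − x^{α₃} + x^{α₁+α₃} + 2x^{α₁+2α₂+α₃})^{−1} over the integers. -/

import Mathlib

/-- A configuration ("state") of a system of `k` stacks in series: container `0`
is the input queue (front at the head of the list), containers `1, …, k` are the
stacks (top at the head), and container `k+1` is the output queue (front at the head). -/
abbrev Conf (k : ℕ) : Type := Fin (k + 2) → List ℕ

/-- Apply the move `m_{i+1}` (for `i : Fin (k+1)`): remove the element at the head of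
container `i` and move it to container `i+1` (pushed on top if the destination is a
stack, appended at the back if it is the output queue).  Returns `none` (the illegal
state `∅`) if the source container is empty. -/
def applyMove {k : ℕ} (i : Fin (k + 1)) (s : Conf k) : Option (Conf k) :=
  match s i.castSucc with
  | [] => none
  | x :: rest =>
      some fun j =>
        if j = i.castSucc then rest
        else if j = i.succ then
          (if (j : ℕ) = k + 1 then s j ++ [x] else x :: s j)
        else s j

/-- The action `w ∗ s` of a string of moves on an (optional) state; moves are applied
left to right, and the illegal state `none` is absorbing. -/
def act {k : ℕ} (w : List (Fin (k + 1))) (s : Option (Conf k)) : Option (Conf k) :=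
  w.foldl (fun t i => t.bind (applyMove i)) s

/-- The initial state `I(n,k)`: the input queue holds `1, …, n` (front to back),
and everything else is empty. -/
def initConf (n k : ℕ) : Conf k :=
  fun j => if (j : ℕ) = 0 then List.range' 1 n else []

/-- The final state whose output queue holds `out` (front to back), all else empty. -/
def finalConf (k : ℕ) (out : List ℕ) : Conf k :=
  fun j => if (j : ℕ) = k + 1 then out else []

/-- `π ∈ Sₙ` is generated by `k` stacks in series if some string of moves takes
`I(n,k)` to the final state with output queue `π(1), …, π(n)` (front to back). -/
def Generates (n k : ℕ) (π : Equiv.Perm (Fin n)) : Prop :=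
  ∃ w : List (Fin (k + 1)),
    act w (some (initConf n k)) = some (finalConf k (List.ofFn fun j => (π j : ℕ) + 1))

/-- `P(n,k)`, the set of permutations of `n` elements generated by `k` stacks in series. -/
def GenPerms (n k : ℕ) : Set (Equiv.Perm (Fin n)) := {π | Generates n k π}

/-- `k_n`, the least number of stacks needed to generate (equivalently, sort) every
permutation of `n` elements. -/
noncomputable def kStacks (n : ℕ) : ℕ := sInf {k | ∀ π : Equiv.Perm (Fin n), Generates n k π}

/-- Two move strings are equivalent, `u ∼ v`, if they act identically on every state. -/
def MoveEquiv {k : ℕ} (u v : List (Fin (k + 1))) : Prop :=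
  ∀ s : Conf k, act u (some s) = act v (some s)

namespace S16

abbrev L3 := List (Fin 3)

def Bad : List L3 := [[0,2],[0,1,1,2],[0,1,2,1]]

def Avoids (w : L3) : Prop := ∀ f ∈ Bad, ¬ f <:+: w

instance : DecidablePred Avoids := fun w => by unfold Avoids; infer_instance

lemma infix_concat {α : Type*} {f w : List α} {c : α} (h : f <:+: w ++ [c]) :
    f <:+: w ∨ f <:+ w ++ [c] := by
  obtain ⟨s, t, hst⟩ := h
  rcases t.eq_nil_or_concat with rfl | ⟨t', c', rfl⟩
  · right; exact ⟨s, by simpa using hst⟩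
  · left
    have h2 : (s ++ f ++ t') ++ [c'] = w ++ [c] := by
      simpa [List.append_assoc] using hst
    obtain ⟨h3, -⟩ := List.append_inj' h2 rfl
    exact ⟨s, t', h3⟩

lemma suffix_concat {α : Type*} {f w : List α} {c : α} (h : f <:+ w ++ [c]) :
    f = [] ∨ ∃ f', f = f' ++ [c] ∧ f' <:+ w := by
  rcases f.eq_nil_or_concat with rfl | ⟨f', c', rfl⟩
  · left; rfl
  · right
    obtain ⟨p, hp⟩ := h
    have h2 : (p ++ f') ++ [c'] = w ++ [c] := by simpa [List.append_assoc] using hp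
    obtain ⟨h3, h4⟩ := List.append_inj' h2 rfl
    simp only [List.cons.injEq] at h4
    exact ⟨f', by rw [h4.1]; simp, ⟨p, h3⟩⟩

lemma suffix_concat_of_suffix {α : Type*} {t w : List α} (c : α) (h : t <:+ w) :
    t ++ [c] <:+ w ++ [c] := by
  obtain ⟨p, rfl⟩ := h; exact ⟨p, by simp⟩

lemma Avoids.of_concat {w : L3} {c : Fin 3} (h : Avoids (w ++ [c])) : Avoids w := by
  intro f hf hinf
  exact h f hf (hinf.trans ⟨[], [c], by simp⟩)

lemma avoids_concat_iff {w : L3} {c : Fin 3} :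
    Avoids (w ++ [c]) ↔ Avoids w ∧ ∀ f ∈ Bad, ¬ f <:+ (w ++ [c]) := by
  constructor
  · exact fun h => ⟨h.of_concat, fun f hf hs => h f hf hs.isInfix⟩
  · rintro ⟨hw, hs⟩ f hf hinf
    rcases infix_concat hinf with h | h
    · exact hw f hf h
    · exact hs f hf h

lemma avoids_nil : Avoids [] := by intro f hf h; fin_cases hf <;> simpa using h.length_le

end S16

namespace S16b
open S16

lemma concat_suffix_concat {α : Type*} {f' w : List α} {c' c : α} :
    f' ++ [c'] <:+ w ++ [c] ↔ c' = c ∧ f' <:+ w := by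
  constructor
  · intro h
    obtain ⟨p, hp⟩ := h
    have h2 : (p ++ f') ++ [c'] = w ++ [c] := by simpa [List.append_assoc] using hp
    obtain ⟨h3, h4⟩ := List.append_inj' h2 rfl
    simp only [List.cons.injEq] at h4
    exact ⟨h4.1, ⟨p, h3⟩⟩
  · rintro ⟨rfl, p, rfl⟩
    exact ⟨p, by simp⟩

lemma mem_bad_02 : ([0,2] : L3) ∈ Bad := by simp [Bad]
lemma mem_bad_0112 : ([0,1,1,2] : L3) ∈ Bad := by simp [Bad]
lemma mem_bad_0121 : ([0,1,2,1] : L3) ∈ Bad := by simp [Bad]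

lemma avoids_concat0 {v : L3} (h : Avoids v) : Avoids (v ++ [0]) := by
  rw [avoids_concat_iff]
  refine ⟨h, ?_⟩
  intro f hf hs
  fin_cases hf
  · exact absurd ((concat_suffix_concat (f' := ([0]:L3)) (c' := 2)).mp hs).1 (by decide)
  · exact absurd ((concat_suffix_concat (f' := ([0,1,1]:L3)) (c' := 2)).mp hs).1 (by decide)
  · exact absurd ((concat_suffix_concat (f' := ([0,1,2]:L3)) (c' := 1)).mp hs).1 (by decide)

lemma avoids_concat1_of_concat0 {v : L3} (h : Avoids (v ++ [0])) :
    Avoids ((v ++ [0]) ++ [1]) := by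
  rw [avoids_concat_iff]
  refine ⟨h, ?_⟩
  intro f hf hs
  fin_cases hf
  · exact absurd ((concat_suffix_concat (f' := ([0]:L3)) (c' := 2)).mp hs).1 (by decide)
  · exact absurd ((concat_suffix_concat (f' := ([0,1,1]:L3)) (c' := 2)).mp hs).1 (by decide)
  · have h2 : ([0,1,2] : L3) <:+ v ++ [0] :=
      ((concat_suffix_concat (f' := ([0,1,2]:L3)) (c' := 1)).mp hs).2
    exact absurd ((concat_suffix_concat (f' := ([0,1]:L3)) (c' := 2)).mp h2).1 (by decide)

lemma avoids_append011 {v : L3} (h : Avoids v) : Avoids (v ++ [0,1,1]) := by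
  have h01 := avoids_concat1_of_concat0 (avoids_concat0 h)
  have h011 : Avoids (((v ++ [0]) ++ [1]) ++ [1]) := by
    rw [avoids_concat_iff]
    refine ⟨h01, ?_⟩
    intro f hf hs
    fin_cases hf
    · exact absurd ((concat_suffix_concat (f' := ([0]:L3)) (c' := 2)).mp hs).1 (by decide)
    · exact absurd ((concat_suffix_concat (f' := ([0,1,1]:L3)) (c' := 2)).mp hs).1 (by decide)
    · have h2 : ([0,1,2] : L3) <:+ (v ++ [0]) ++ [1] :=
        ((concat_suffix_concat (f' := ([0,1,2]:L3)) (c' := 1)).mp hs).2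
      exact absurd ((concat_suffix_concat (f' := ([0,1]:L3)) (c' := 2)).mp h2).1 (by decide)
  have e : ((v ++ [0]) ++ [1]) ++ [1] = v ++ [0,1,1] := by simp
  rwa [e] at h011

lemma avoids_append012 {v : L3} (h : Avoids v) : Avoids (v ++ [0,1,2]) := by
  have h01 := avoids_concat1_of_concat0 (avoids_concat0 h)
  have h012 : Avoids (((v ++ [0]) ++ [1]) ++ [2]) := by
    rw [avoids_concat_iff]
    refine ⟨h01, ?_⟩
    intro f hf hs
    fin_cases hf
    · have h2 : ([0] : L3) <:+ (v ++ [0]) ++ [1] :=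
        ((concat_suffix_concat (f' := ([0]:L3)) (c' := 2)).mp hs).2
      exact absurd ((concat_suffix_concat (f' := ([]:L3)) (c' := 0)).mp h2).1 (by decide)
    · have h2 : ([0,1,1] : L3) <:+ (v ++ [0]) ++ [1] :=
        ((concat_suffix_concat (f' := ([0,1,1]:L3)) (c' := 2)).mp hs).2
      have h3 : ([0,1] : L3) <:+ v ++ [0] :=
        ((concat_suffix_concat (f' := ([0,1]:L3)) (c' := 1)).mp h2).2
      exact absurd ((concat_suffix_concat (f' := ([0]:L3)) (c' := 1)).mp h3).1 (by decide)
    · exact absurd ((concat_suffix_concat (f' := ([0,1,2]:L3)) (c' := 1)).mp hs).1 (by decide)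
  have e : ((v ++ [0]) ++ [1]) ++ [2] = v ++ [0,1,2] := by simp
  rwa [e] at h012

lemma not_avoids_concat1_iff {v : L3} (h : Avoids v) :
    ¬ Avoids (v ++ [1]) ↔ ([0,1,2] : L3) <:+ v := by
  constructor
  · intro hna
    rw [avoids_concat_iff] at hna
    push_neg at hna
    obtain ⟨f, hf, hs⟩ := hna h
    fin_cases hf
    · exact absurd ((concat_suffix_concat (f' := ([0]:L3)) (c' := 2)).mp hs).1 (by decide)
    · exact absurd ((concat_suffix_concat (f' := ([0,1,1]:L3)) (c' := 2)).mp hs).1 (by decide)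
    · exact ((concat_suffix_concat (f' := ([0,1,2]:L3)) (c' := 1)).mp hs).2
  · intro hs hA
    exact hA [0,1,2,1] mem_bad_0121
      ((concat_suffix_concat (f' := ([0,1,2]:L3)) (c' := 1)).mpr ⟨rfl, hs⟩).isInfix

lemma not_avoids_concat2_iff {v : L3} (h : Avoids v) :
    ¬ Avoids (v ++ [2]) ↔ (([0] : L3) <:+ v ∨ ([0,1,1] : L3) <:+ v) := by
  constructor
  · intro hna
    rw [avoids_concat_iff] at hna
    push_neg at hna
    obtain ⟨f, hf, hs⟩ := hna h
    fin_cases hf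
    · exact Or.inl ((concat_suffix_concat (f' := ([0]:L3)) (c' := 2)).mp hs).2
    · exact Or.inr ((concat_suffix_concat (f' := ([0,1,1]:L3)) (c' := 2)).mp hs).2
    · exact absurd ((concat_suffix_concat (f' := ([0,1,2]:L3)) (c' := 1)).mp hs).1 (by decide)
  · rintro (hs | hs) hA
    · exact hA [0,2] mem_bad_02
        ((concat_suffix_concat (f' := ([0]:L3)) (c' := 2)).mpr ⟨rfl, hs⟩).isInfix
    · exact hA [0,1,1,2] mem_bad_0112
        ((concat_suffix_concat (f' := ([0,1,1]:L3)) (c' := 2)).mpr ⟨rfl, hs⟩).isInfix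

lemma singleton_suffix_unique {α : Type*} {a b : α} {w : List α}
    (ha : [a] <:+ w) (hb : [b] <:+ w) : a = b := by
  obtain ⟨p, rfl⟩ := ha
  have := (concat_suffix_concat (f' := ([]:List α)) (c' := b)).mp hb
  exact this.1.symm

end S16b

namespace S16c
open S16 S16b

lemma _root_.S16.Avoids.of_append {v t : L3} (h : Avoids (v ++ t)) : Avoids v :=
  fun f hf hinf => h f hf (hinf.trans ⟨[], t, by simp⟩)

section Weights
variable (α₁ α₂ α₃ : ℕ)

/-- weight of a word -/
def wt (w : L3) : ℕ := (w.map ![α₁, α₂, α₃]).sum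

lemma wt_nil : wt α₁ α₂ α₃ [] = 0 := rfl

lemma wt_append (u v : L3) : wt α₁ α₂ α₃ (u ++ v) = wt α₁ α₂ α₃ u + wt α₁ α₂ α₃ v := by
  simp [wt]

lemma length_le_wt (h₁ : 0 < α₁) (h₂ : 0 < α₂) (h₃ : 0 < α₃) (w : L3) :
    w.length ≤ wt α₁ α₂ α₃ w := by
  induction w with
  | nil => simp [wt]
  | cons c t ih =>
      have hc : 1 ≤ ![α₁, α₂, α₃] c := by fin_cases c <;> simp <;> omega
      have h : wt α₁ α₂ α₃ (c :: t) = ![α₁, α₂, α₃] c + wt α₁ α₂ α₃ t := by simp [wt]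
      rw [h]; simp only [List.length_cons]; omega

/-- the set of avoiding words of weight `m` -/
def AW (m : ℕ) : Set L3 := {w | Avoids w ∧ wt α₁ α₂ α₃ w = m}

lemma AW_finite (h₁ : 0 < α₁) (h₂ : 0 < α₂) (h₃ : 0 < α₃) (m : ℕ) :
    (AW α₁ α₂ α₃ m).Finite := by
  apply (List.finite_length_le (Fin 3) m).subset
  intro w hw
  simp only [Set.mem_setOf_eq]
  exact le_trans (length_le_wt α₁ α₂ α₃ h₁ h₂ h₃ w) (le_of_eq hw.2)

/-- number of avoiding words of weight `m` -/
noncomputable def Nc (m : ℕ) : ℕ := (AW α₁ α₂ α₃ m).ncard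

lemma Nc_zero (h₁ : 0 < α₁) (h₂ : 0 < α₂) (h₃ : 0 < α₃) : Nc α₁ α₂ α₃ 0 = 1 := by
  have h : AW α₁ α₂ α₃ 0 = {([] : L3)} := by
    ext w
    constructor
    · rintro ⟨-, hw⟩
      have hl := length_le_wt α₁ α₂ α₃ h₁ h₂ h₃ w
      rw [hw] at hl
      simpa using List.length_eq_zero_iff.mp (Nat.le_zero.mp hl)
    · rintro rfl
      exact ⟨avoids_nil, rfl⟩
  rw [Nc, h, Set.ncard_singleton]

/-- avoiding words of weight `m` with suffix `t` -/
def Q (t : L3) (m : ℕ) : Set L3 := {w | Avoids w ∧ wt α₁ α₂ α₃ w = m ∧ t <:+ w}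

lemma Q_finite (h₁ : 0 < α₁) (h₂ : 0 < α₂) (h₃ : 0 < α₃) (t : L3) (m : ℕ) :
    (Q α₁ α₂ α₃ t m).Finite :=
  (AW_finite α₁ α₂ α₃ h₁ h₂ h₃ m).subset (fun w hw => ⟨hw.1, hw.2.1⟩)

lemma Q_empty {t : L3} {m : ℕ} (h : ¬ wt α₁ α₂ α₃ t ≤ m) : Q α₁ α₂ α₃ t m = ∅ := by
  ext w
  simp only [Q, Set.mem_setOf_eq, Set.mem_empty_iff_false, iff_false, not_and]
  rintro - hwt ⟨p, rfl⟩
  rw [wt_append] at hwt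
  omega

lemma ncard_Q_free {t : L3} (hfree : ∀ v : L3, Avoids v → Avoids (v ++ t)) (m : ℕ) :
    (Q α₁ α₂ α₃ t (m + wt α₁ α₂ α₃ t)).ncard = Nc α₁ α₂ α₃ m := by
  have himg : Q α₁ α₂ α₃ t (m + wt α₁ α₂ α₃ t) = (· ++ t) '' (AW α₁ α₂ α₃ m) := by
    ext w
    constructor
    · rintro ⟨hA, hwt, p, rfl⟩
      refine ⟨p, ⟨hA.of_append, ?_⟩, rfl⟩
      rw [wt_append] at hwt
      omega
    · rintro ⟨v, ⟨hA, hwt⟩, rfl⟩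
      exact ⟨hfree v hA, by rw [wt_append, hwt], ⟨v, rfl⟩⟩
  rw [himg, Set.ncard_image_of_injective _ (fun x y h => by simpa using h)]
  rfl

lemma ncard_Q_free' {t : L3} (hfree : ∀ v : L3, Avoids v → Avoids (v ++ t)) (m : ℕ) :
    (Q α₁ α₂ α₃ t m).ncard
      = if wt α₁ α₂ α₃ t ≤ m then Nc α₁ α₂ α₃ (m - wt α₁ α₂ α₃ t) else 0 := by
  split_ifs with h
  · rw [← Nat.sub_add_cancel h, ncard_Q_free α₁ α₂ α₃ hfree, Nat.add_sub_cancel]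
  · rw [Q_empty α₁ α₂ α₃ h, Set.ncard_empty]

end Weights
end S16c

namespace S16d
open S16 S16b S16c

section Rec
variable (α₁ α₂ α₃ : ℕ)

lemma wt_t0 : wt α₁ α₂ α₃ [0] = α₁ := by simp [wt]
lemma wt_t1 : wt α₁ α₂ α₃ [1] = α₂ := by simp [wt]
lemma wt_t2 : wt α₁ α₂ α₃ [2] = α₃ := by simp [wt]
lemma wt_t011 : wt α₁ α₂ α₃ [0,1,1] = α₁ + 2 * α₂ := by simp [wt]; ring
lemma wt_t012 : wt α₁ α₂ α₃ [0,1,2] = α₁ + α₂ + α₃ := by simp [wt]; ring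

variable (h₁ : 0 < α₁) (h₂ : 0 < α₂) (h₃ : 0 < α₃)
include h₁ h₂ h₃

lemma split_letter (c : Fin 3) (m' : ℕ) :
    Nc α₁ α₂ α₃ m' = (Q α₁ α₂ α₃ [c] (m' + wt α₁ α₂ α₃ [c])).ncard
      + {v | (Avoids v ∧ wt α₁ α₂ α₃ v = m') ∧ ¬ Avoids (v ++ [c])}.ncard := by
  classical
  set S1 : Set L3 := {v | (Avoids v ∧ wt α₁ α₂ α₃ v = m') ∧ Avoids (v ++ [c])} with hS1
  set S2 : Set L3 := {v | (Avoids v ∧ wt α₁ α₂ α₃ v = m') ∧ ¬ Avoids (v ++ [c])} with hS2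
  have hsub1 : S1 ⊆ AW α₁ α₂ α₃ m' := fun v hv => hv.1
  have hsub2 : S2 ⊆ AW α₁ α₂ α₃ m' := fun v hv => hv.1
  have hunion : AW α₁ α₂ α₃ m' = S1 ∪ S2 := by
    ext v
    by_cases hc : Avoids (v ++ [c])
    · simp [AW, hS1, hS2, hc]
    · simp [AW, hS1, hS2, hc]
  have hdisj : Disjoint S1 S2 :=
    Set.disjoint_left.mpr (fun v hv hv' => hv'.2 hv.2)
  have himg : Q α₁ α₂ α₃ [c] (m' + wt α₁ α₂ α₃ [c]) = (· ++ [c]) '' S1 := by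
    ext w
    constructor
    · rintro ⟨hA, hwt, p, rfl⟩
      rw [wt_append] at hwt
      exact ⟨p, ⟨⟨hA.of_append, by omega⟩, hA⟩, rfl⟩
    · rintro ⟨v, ⟨⟨hA, hwt⟩, hA'⟩, rfl⟩
      exact ⟨hA', by rw [wt_append, hwt], ⟨v, rfl⟩⟩
  rw [Nc, hunion, Set.ncard_union_eq hdisj
      ((AW_finite α₁ α₂ α₃ h₁ h₂ h₃ m').subset hsub1)
      ((AW_finite α₁ α₂ α₃ h₁ h₂ h₃ m').subset hsub2),
    himg, Set.ncard_image_of_injective _ (fun x y h => by simpa using h)]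

lemma split0 (m' : ℕ) :
    Nc α₁ α₂ α₃ m' = (Q α₁ α₂ α₃ [0] (m' + α₁)).ncard := by
  have h := split_letter α₁ α₂ α₃ h₁ h₂ h₃ 0 m'
  rw [wt_t0] at h
  have he : {v | (Avoids v ∧ wt α₁ α₂ α₃ v = m') ∧ ¬ Avoids (v ++ [0])} = (∅ : Set L3) := by
    ext v
    simp only [Set.mem_setOf_eq, Set.mem_empty_iff_false, iff_false, not_and]
    exact fun hv hn => hn (avoids_concat0 hv.1)
  rw [he, Set.ncard_empty, Nat.add_zero] at h
  exact h

lemma split1 (m' : ℕ) :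
    Nc α₁ α₂ α₃ m' = (Q α₁ α₂ α₃ [1] (m' + α₂)).ncard + (Q α₁ α₂ α₃ [0,1,2] m').ncard := by
  have h := split_letter α₁ α₂ α₃ h₁ h₂ h₃ 1 m'
  rw [wt_t1] at h
  have he : {v | (Avoids v ∧ wt α₁ α₂ α₃ v = m') ∧ ¬ Avoids (v ++ [1])}
      = Q α₁ α₂ α₃ [0,1,2] m' := by
    ext v
    simp only [Set.mem_setOf_eq, Q]
    constructor
    · rintro ⟨⟨hA, hwt⟩, hn⟩
      exact ⟨hA, hwt, (not_avoids_concat1_iff hA).mp hn⟩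
    · rintro ⟨hA, hwt, hs⟩
      exact ⟨⟨hA, hwt⟩, (not_avoids_concat1_iff hA).mpr hs⟩
  rw [he] at h
  exact h

lemma split2 (m' : ℕ) :
    Nc α₁ α₂ α₃ m' = (Q α₁ α₂ α₃ [2] (m' + α₃)).ncard + ((Q α₁ α₂ α₃ [0] m').ncard
      + (Q α₁ α₂ α₃ [0,1,1] m').ncard) := by
  have h := split_letter α₁ α₂ α₃ h₁ h₂ h₃ 2 m'
  rw [wt_t2] at h
  have he : {v | (Avoids v ∧ wt α₁ α₂ α₃ v = m') ∧ ¬ Avoids (v ++ [2])}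
      = Q α₁ α₂ α₃ [0] m' ∪ Q α₁ α₂ α₃ [0,1,1] m' := by
    ext v
    simp only [Set.mem_setOf_eq, Q, Set.mem_union]
    constructor
    · rintro ⟨⟨hA, hwt⟩, hn⟩
      rcases (not_avoids_concat2_iff hA).mp hn with hs | hs
      · exact Or.inl ⟨hA, hwt, hs⟩
      · exact Or.inr ⟨hA, hwt, hs⟩
    · rintro (⟨hA, hwt, hs⟩ | ⟨hA, hwt, hs⟩)
      · exact ⟨⟨hA, hwt⟩, (not_avoids_concat2_iff hA).mpr (Or.inl hs)⟩
      · exact ⟨⟨hA, hwt⟩, (not_avoids_concat2_iff hA).mpr (Or.inr hs)⟩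
  have hdisj : Disjoint (Q α₁ α₂ α₃ [0] m') (Q α₁ α₂ α₃ [0,1,1] m') := by
    refine Set.disjoint_left.mpr (fun v hv hv' => ?_)
    have h1 : ([1] : L3) <:+ v := List.IsSuffix.trans ⟨[0,1], rfl⟩ hv'.2.2
    exact absurd (singleton_suffix_unique hv.2.2 h1) (by decide)
  rw [he, Set.ncard_union_eq hdisj
      (Q_finite α₁ α₂ α₃ h₁ h₂ h₃ _ _) (Q_finite α₁ α₂ α₃ h₁ h₂ h₃ _ _)] at h
  exact h

lemma partition_last (m : ℕ) (hm : 0 < m) :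
    Nc α₁ α₂ α₃ m = (Q α₁ α₂ α₃ [0] m).ncard + (Q α₁ α₂ α₃ [1] m).ncard
      + (Q α₁ α₂ α₃ [2] m).ncard := by
  have hcover : AW α₁ α₂ α₃ m = Q α₁ α₂ α₃ [0] m ∪ Q α₁ α₂ α₃ [1] m ∪ Q α₁ α₂ α₃ [2] m := by
    ext w
    constructor
    · rintro ⟨hA, hwt⟩
      rcases w.eq_nil_or_concat with rfl | ⟨p, c, rfl⟩
      · rw [wt_nil] at hwt; omega
      · simp only [List.concat_eq_append] at hA hwt ⊢
        have hs : [c] <:+ p ++ [c] := ⟨p, rfl⟩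
        fin_cases c
        · exact Or.inl (Or.inl ⟨hA, hwt, hs⟩)
        · exact Or.inl (Or.inr ⟨hA, hwt, hs⟩)
        · exact Or.inr ⟨hA, hwt, hs⟩
    · rintro ((⟨hA, hwt, -⟩ | ⟨hA, hwt, -⟩) | ⟨hA, hwt, -⟩) <;> exact ⟨hA, hwt⟩
  have hd01 : Disjoint (Q α₁ α₂ α₃ [0] m) (Q α₁ α₂ α₃ [1] m) :=
    Set.disjoint_left.mpr (fun v hv hv' =>
      absurd (singleton_suffix_unique hv.2.2 hv'.2.2) (by decide))
  have hd2 : Disjoint (Q α₁ α₂ α₃ [0] m ∪ Q α₁ α₂ α₃ [1] m) (Q α₁ α₂ α₃ [2] m) := by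
    refine Set.disjoint_left.mpr (fun v hv hv' => ?_)
    rcases hv with hv | hv <;>
      exact absurd (singleton_suffix_unique hv.2.2 hv'.2.2) (by decide)
  rw [Nc, hcover,
    Set.ncard_union_eq hd2
      ((Q_finite α₁ α₂ α₃ h₁ h₂ h₃ _ _).union (Q_finite α₁ α₂ α₃ h₁ h₂ h₃ _ _))
      (Q_finite α₁ α₂ α₃ h₁ h₂ h₃ _ _),
    Set.ncard_union_eq hd01 (Q_finite α₁ α₂ α₃ h₁ h₂ h₃ _ _)
      (Q_finite α₁ α₂ α₃ h₁ h₂ h₃ _ _)]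

end Rec
end S16d

namespace S16e
open S16 S16b S16c S16d

variable (α₁ α₂ α₃ : ℕ) (h₁ : 0 < α₁) (h₂ : 0 < α₂) (h₃ : 0 < α₃)
include h₁ h₂ h₃

lemma Nc_rec (m : ℕ) (hm : 0 < m) :
    (Nc α₁ α₂ α₃ m : ℤ)
      = (if α₁ ≤ m then (Nc α₁ α₂ α₃ (m - α₁) : ℤ) else 0)
      + (if α₂ ≤ m then (Nc α₁ α₂ α₃ (m - α₂) : ℤ) else 0)
      + (if α₃ ≤ m then (Nc α₁ α₂ α₃ (m - α₃) : ℤ) else 0)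
      - (if α₁ + α₃ ≤ m then (Nc α₁ α₂ α₃ (m - (α₁ + α₃)) : ℤ) else 0)
      - 2 * (if α₁ + 2 * α₂ + α₃ ≤ m then (Nc α₁ α₂ α₃ (m - (α₁ + 2 * α₂ + α₃)) : ℤ) else 0) := by
  have hpart := partition_last α₁ α₂ α₃ h₁ h₂ h₃ m hm
  -- G1
  have hG1 : (if α₁ ≤ m then Nc α₁ α₂ α₃ (m - α₁) else 0) = (Q α₁ α₂ α₃ [0] m).ncard := by
    split_ifs with h
    · have := split0 α₁ α₂ α₃ h₁ h₂ h₃ (m - α₁)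
      rwa [Nat.sub_add_cancel h] at this
    · rw [Q_empty α₁ α₂ α₃ (by rw [wt_t0]; omega), Set.ncard_empty]
  -- G2
  have hG2 : (if α₂ ≤ m then Nc α₁ α₂ α₃ (m - α₂) else 0)
      = (Q α₁ α₂ α₃ [1] m).ncard
        + (if α₁ + 2 * α₂ + α₃ ≤ m then Nc α₁ α₂ α₃ (m - (α₁ + 2 * α₂ + α₃)) else 0) := by
    split_ifs with h h'
    · have hs := split1 α₁ α₂ α₃ h₁ h₂ h₃ (m - α₂)
      rw [Nat.sub_add_cancel h] at hs
      rw [hs, ncard_Q_free' α₁ α₂ α₃ (fun v hv => avoids_append012 hv) (m - α₂), wt_t012]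
      rw [if_pos (by omega)]
      congr 2
      omega
    · have hs := split1 α₁ α₂ α₃ h₁ h₂ h₃ (m - α₂)
      rw [Nat.sub_add_cancel h] at hs
      rw [hs, ncard_Q_free' α₁ α₂ α₃ (fun v hv => avoids_append012 hv) (m - α₂), wt_t012]
      rw [if_neg (by omega)]
    · omega
    · rw [Q_empty α₁ α₂ α₃ (by rw [wt_t1]; omega), Set.ncard_empty]
  -- G3
  have hG3 : (if α₃ ≤ m then Nc α₁ α₂ α₃ (m - α₃) else 0)
      = (Q α₁ α₂ α₃ [2] m).ncard
        + ((if α₁ + α₃ ≤ m then Nc α₁ α₂ α₃ (m - (α₁ + α₃)) else 0)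
        + (if α₁ + 2 * α₂ + α₃ ≤ m then Nc α₁ α₂ α₃ (m - (α₁ + 2 * α₂ + α₃)) else 0)) := by
    by_cases h : α₃ ≤ m
    · rw [if_pos h]
      have hs := split2 α₁ α₂ α₃ h₁ h₂ h₃ (m - α₃)
      rw [Nat.sub_add_cancel h] at hs
      rw [hs, ncard_Q_free' α₁ α₂ α₃ (fun v hv => avoids_concat0 hv) (m - α₃), wt_t0,
        ncard_Q_free' α₁ α₂ α₃ (fun v hv => avoids_append011 hv) (m - α₃), wt_t011]
      have ha : (if α₁ ≤ m - α₃ then Nc α₁ α₂ α₃ (m - α₃ - α₁) else 0)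
          = (if α₁ + α₃ ≤ m then Nc α₁ α₂ α₃ (m - (α₁ + α₃)) else 0) := by
        have e : m - α₃ - α₁ = m - (α₁ + α₃) := by omega
        rw [e]
        by_cases hc : α₁ + α₃ ≤ m
        · rw [if_pos hc, if_pos (by omega)]
        · rw [if_neg hc, if_neg (by omega)]
      have hb : (if α₁ + 2 * α₂ ≤ m - α₃ then Nc α₁ α₂ α₃ (m - α₃ - (α₁ + 2 * α₂)) else 0)
          = (if α₁ + 2 * α₂ + α₃ ≤ m then Nc α₁ α₂ α₃ (m - (α₁ + 2 * α₂ + α₃)) else 0) := by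
        have e : m - α₃ - (α₁ + 2 * α₂) = m - (α₁ + 2 * α₂ + α₃) := by omega
        rw [e]
        by_cases hc : α₁ + 2 * α₂ + α₃ ≤ m
        · rw [if_pos hc, if_pos (by omega)]
        · rw [if_neg hc, if_neg (by omega)]
      rw [ha, hb]
    · rw [if_neg h, Q_empty α₁ α₂ α₃ (by rw [wt_t2]; omega), Set.ncard_empty,
        if_neg (by omega : ¬ α₁ + α₃ ≤ m), if_neg (by omega : ¬ α₁ + 2 * α₂ + α₃ ≤ m)]
  -- combine over ℤ
  have e1 : ((if α₁ ≤ m then Nc α₁ α₂ α₃ (m - α₁) else 0 : ℕ) : ℤ)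
      = (if α₁ ≤ m then (Nc α₁ α₂ α₃ (m - α₁) : ℤ) else 0) := by split_ifs <;> simp
  have e2 : ((if α₂ ≤ m then Nc α₁ α₂ α₃ (m - α₂) else 0 : ℕ) : ℤ)
      = (if α₂ ≤ m then (Nc α₁ α₂ α₃ (m - α₂) : ℤ) else 0) := by split_ifs <;> simp
  have e3 : ((if α₃ ≤ m then Nc α₁ α₂ α₃ (m - α₃) else 0 : ℕ) : ℤ)
      = (if α₃ ≤ m then (Nc α₁ α₂ α₃ (m - α₃) : ℤ) else 0) := by split_ifs <;> simp
  have e4 : ((if α₁ + α₃ ≤ m then Nc α₁ α₂ α₃ (m - (α₁ + α₃)) else 0 : ℕ) : ℤ)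
      = (if α₁ + α₃ ≤ m then (Nc α₁ α₂ α₃ (m - (α₁ + α₃)) : ℤ) else 0) := by split_ifs <;> simp
  have e5 : ((if α₁ + 2 * α₂ + α₃ ≤ m then Nc α₁ α₂ α₃ (m - (α₁ + 2 * α₂ + α₃)) else 0 : ℕ) : ℤ)
      = (if α₁ + 2 * α₂ + α₃ ≤ m then (Nc α₁ α₂ α₃ (m - (α₁ + 2 * α₂ + α₃)) : ℤ) else 0) := by
    split_ifs <;> simp
  rw [← e1, ← e2, ← e3, ← e4, ← e5]
  omega

end S16e

namespace S16f
open S16 S16b S16c S16d S16e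


lemma act_nil {k : ℕ} (s : Option (Conf k)) : act [] s = s := rfl
lemma act_cons {k : ℕ} (i : Fin (k+1)) (w : List (Fin (k+1))) (s : Option (Conf k)) :
    act (i :: w) s = act w (s.bind (applyMove i)) := rfl
lemma act_append {k : ℕ} (u v : List (Fin (k+1))) (s : Option (Conf k)) :
    act (u ++ v) s = act v (act u s) := by
  simp [act, List.foldl_append]
lemma act_none {k : ℕ} (w : List (Fin (k+1))) : act w none = none := by
  induction w with
  | nil => rfl
  | cons i w ih => rw [act_cons]; simpa using ih

lemma ecs0 : (Fin.castSucc (0 : Fin 3)) = (0 : Fin 4) := rfl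
lemma ecs1 : (Fin.castSucc (1 : Fin 3)) = (1 : Fin 4) := rfl
lemma ecs2 : (Fin.castSucc (2 : Fin 3)) = (2 : Fin 4) := rfl
lemma es0 : (Fin.succ (0 : Fin 3)) = (1 : Fin 4) := rfl
lemma es1 : (Fin.succ (1 : Fin 3)) = (2 : Fin 4) := rfl
lemma es2 : (Fin.succ (2 : Fin 3)) = (3 : Fin 4) := rfl

lemma rel_02 (s : Conf 2) : act [0, 2] (some s) = act [2, 0] (some s) := by
  simp only [act_cons, act_nil, Option.bind_some]
  cases h0 : s 0 with
  | nil =>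
      cases h2 : s 2 with
      | nil => simp [applyMove, ecs0, ecs1, ecs2, es0, es1, es2, h0, h2]
      | cons y r2 => simp [applyMove, ecs0, ecs1, ecs2, es0, es1, es2, h0, h2]
  | cons x r0 =>
      cases h2 : s 2 with
      | nil => simp [applyMove, ecs0, ecs1, ecs2, es0, es1, es2, h0, h2]
      | cons y r2 =>
          simp only [applyMove.eq_1, ecs0, ecs1, ecs2, es0, es1, es2, h0, h2]
          simp only [Option.bind_some]
          simp only [reduceIte, reduceCtorEq, Fin.reduceEq]
          rw [h2, h0]
          refine congrArg some ?_
          funext j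
          fin_cases j <;> simp [h0, h2]

lemma rel_0112 (s : Conf 2) : act [0, 1, 1, 2] (some s) = act [1, 0, 2, 1] (some s) := by
  simp only [act_cons, act_nil, Option.bind_some]
  cases h0 : s 0 with
  | nil =>
      cases h1 : s 1 with
      | nil => simp [applyMove, ecs0, ecs1, ecs2, es0, es1, es2, h0, h1]
      | cons y r1 =>
          simp only [applyMove.eq_1, ecs0, ecs1, ecs2, es0, es1, es2, h0, h1]
          simp [Option.bind_some, Option.bind_none, reduceIte, Fin.reduceEq, h0]
  | cons x r0 =>
      cases h1 : s 1 with
      | nil =>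
          simp only [applyMove.eq_1, ecs0, ecs1, ecs2, es0, es1, es2, h0, h1]
          simp [Option.bind_some, Option.bind_none, reduceIte, Fin.reduceEq, h0, h1]
      | cons y r1 =>
          simp only [applyMove.eq_1, ecs0, ecs1, ecs2, es0, es1, es2, h0, h1]
          simp only [Option.bind_some, Option.bind_none, reduceIte, reduceCtorEq,
            Fin.reduceEq, h0, h1]
          refine congrArg some ?_
          funext j
          fin_cases j <;> simp [h0, h1]

lemma rel_0121 (s : Conf 2) : act [0, 1, 2, 1] (some s) = act [1, 0, 1, 2] (some s) := by
  simp only [act_cons, act_nil, Option.bind_some]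
  cases h0 : s 0 with
  | nil =>
      cases h1 : s 1 with
      | nil => simp [applyMove, ecs0, ecs1, ecs2, es0, es1, es2, h0, h1]
      | cons y r1 =>
          simp only [applyMove.eq_1, ecs0, ecs1, ecs2, es0, es1, es2, h0, h1]
          simp [Option.bind_some, Option.bind_none, reduceIte, Fin.reduceEq, h0]
  | cons x r0 =>
      cases h1 : s 1 with
      | nil =>
          simp only [applyMove.eq_1, ecs0, ecs1, ecs2, es0, es1, es2, h0, h1]
          simp [Option.bind_some, Option.bind_none, reduceIte, Fin.reduceEq, h0, h1]
      | cons y r1 =>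
          simp only [applyMove.eq_1, ecs0, ecs1, ecs2, es0, es1, es2, h0, h1]
          simp only [Option.bind_some, Option.bind_none, reduceIte, reduceCtorEq,
            Fin.reduceEq, h0, h1]
          refine congrArg some ?_
          funext j
          fin_cases j <;> simp [h0, h1]

lemma act_congr {u u' : List (Fin 3)} (h : ∀ s : Conf 2, act u (some s) = act u' (some s))
    (x y : List (Fin 3)) (s : Conf 2) :
    act (x ++ u ++ y) (some s) = act (x ++ u' ++ y) (some s) := by
  rw [act_append, act_append, act_append, act_append]
  cases hx : act x (some s) with
  | none => rw [act_none, act_none, act_none, act_none]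
  | some s₁ => rw [h s₁]

/-- the termination measure for rewriting -/
def mu : List (Fin 3) → ℕ
  | [] => 0
  | c :: t => (if c = 0 then t.countP (fun d => !decide (d = 0)) else 0) + mu t

lemma mu_append (x y : List (Fin 3)) :
    mu (x ++ y) = mu x + mu y
      + (x.countP (fun d => decide (d = 0))) * (y.countP (fun d => !decide (d = 0))) := by
  induction x with
  | nil => simp [mu]
  | cons c x ih =>
      simp only [List.cons_append, mu, List.append_eq, List.countP_append,
        List.countP_cons, ih]
      by_cases hc : c = 0
      · simp [hc]
        ring
      · simp [hc]

lemma mu_rewrite {u u' : List (Fin 3)} (x y : List (Fin 3)) (hm : mu u' < mu u)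
    (hc0 : u.countP (fun d => decide (d = 0)) = u'.countP (fun d => decide (d = 0)))
    (hc1 : u.countP (fun d => !decide (d = 0)) = u'.countP (fun d => !decide (d = 0))) :
    mu (x ++ u' ++ y) < mu (x ++ u ++ y) := by
  rw [mu_append, mu_append, mu_append, mu_append, List.countP_append, List.countP_append,
    hc0, hc1]
  omega

end S16f


namespace S16g
open S16 S16b S16c S16d S16e S16f

lemma rewrite_step (w : List (Fin 3)) (hn : ¬ Avoids w) :
    ∃ w₂ : List (Fin 3), mu w₂ < mu w ∧
      (∀ a b c : ℕ, wt a b c w₂ = wt a b c w) ∧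
      ∀ s : Conf 2, act w (some s) = act w₂ (some s) := by
  unfold Avoids at hn
  push_neg at hn
  obtain ⟨f, hf, x, y, hw⟩ := hn
  subst hw
  fin_cases hf
  · refine ⟨x ++ [2,0] ++ y, mu_rewrite x y (by decide) (by decide) (by decide), ?_, ?_⟩
    · intro a b c
      rw [wt_append, wt_append, wt_append, wt_append]
      have : wt a b c [2,0] = wt a b c [0,2] := by simp [wt]; omega
      omega
    · exact fun s => act_congr rel_02 x y s
  · refine ⟨x ++ [1,0,2,1] ++ y, mu_rewrite x y (by decide) (by decide) (by decide), ?_, ?_⟩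
    · intro a b c
      rw [wt_append, wt_append, wt_append, wt_append]
      have : wt a b c [1,0,2,1] = wt a b c [0,1,1,2] := by simp [wt]; omega
      omega
    · exact fun s => act_congr rel_0112 x y s
  · refine ⟨x ++ [1,0,1,2] ++ y, mu_rewrite x y (by decide) (by decide) (by decide), ?_, ?_⟩
    · intro a b c
      rw [wt_append, wt_append, wt_append, wt_append]
      have : wt a b c [1,0,1,2] = wt a b c [0,1,2,1] := by simp [wt]; omega
      omega
    · exact fun s => act_congr rel_0121 x y s

lemma exists_normal_aux : ∀ (N : ℕ) (w : List (Fin 3)), mu w ≤ N →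
    ∃ w', Avoids w' ∧ (∀ a b c : ℕ, wt a b c w' = wt a b c w) ∧
      (∀ s : Conf 2, act w (some s) = act w' (some s)) := by
  intro N
  induction N with
  | zero =>
      intro w hw
      by_cases hA : Avoids w
      · exact ⟨w, hA, fun _ _ _ => rfl, fun _ => rfl⟩
      · obtain ⟨w₂, hmu, -, -⟩ := rewrite_step w hA
        omega
  | succ N ih =>
      intro w hw
      by_cases hA : Avoids w
      · exact ⟨w, hA, fun _ _ _ => rfl, fun _ => rfl⟩
      · obtain ⟨w₂, hmu, hwt, hact⟩ := rewrite_step w hA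
        obtain ⟨w', hA', hwt', hact'⟩ := ih w₂ (by omega)
        exact ⟨w', hA', fun a b c => (hwt' a b c).trans (hwt a b c),
          fun s => (hact s).trans (hact' s)⟩

lemma exists_normal (w : List (Fin 3)) :
    ∃ w', Avoids w' ∧ (∀ a b c : ℕ, wt a b c w' = wt a b c w) ∧
      (∀ s : Conf 2, act w (some s) = act w' (some s)) :=
  exists_normal_aux (mu w) w le_rfl

lemma act_length (w : List (Fin 3)) : ∀ s s' : Conf 2, act w (some s) = some s' → ∀ j : Fin 4,
    (s j).length + w.countP (fun x => decide (Fin.succ x = j))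
      = (s' j).length + w.countP (fun x => decide (Fin.castSucc x = j)) := by
  induction w with
  | nil =>
      intro s s' h j
      rw [act_nil, Option.some.injEq] at h
      subst h
      simp
  | cons i w ih =>
      intro s s' h j
      rw [act_cons, Option.bind_some] at h
      cases hsc : s i.castSucc with
      | nil =>
          rw [show applyMove i s = none by simp [applyMove, hsc], act_none] at h
          exact absurd h (by simp)
      | cons xx rest =>
          have hap : applyMove i s = some (fun j => if j = i.castSucc then rest
              else if j = i.succ then (if (j : ℕ) = 2 + 1 then s j ++ [xx] else xx :: s j)
              else s j) := by
            simp [applyMove, hsc]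
          rw [hap] at h
          have H := ih _ s' h j
          have hne : i.castSucc ≠ i.succ := (Fin.castSucc_lt_succ (i := i)).ne
          have hc1 : (i :: w).countP (fun x => decide (Fin.succ x = j))
              = w.countP (fun x => decide (Fin.succ x = j))
                + (if Fin.succ i = j then 1 else 0) := by
            rw [List.countP_cons]
            by_cases hh : Fin.succ i = j <;> simp [hh]
          have hc2 : (i :: w).countP (fun x => decide (Fin.castSucc x = j))
              = w.countP (fun x => decide (Fin.castSucc x = j))
                + (if Fin.castSucc i = j then 1 else 0) := by
            rw [List.countP_cons]
            by_cases hh : Fin.castSucc i = j <;> simp [hh]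
          rw [hc1, hc2]
          by_cases hj1 : j = i.castSucc
          · rw [if_neg (by rw [hj1]; exact fun hh => hne hh.symm), if_pos hj1.symm]
            rw [if_pos hj1] at H
            have hlen : (s j).length = rest.length + 1 := by rw [hj1, hsc]; simp
            omega
          · by_cases hj2 : j = i.succ
            · rw [if_pos hj2.symm, if_neg (by rw [hj2]; exact fun hh => hne hh)]
              rw [if_neg hj1, if_pos hj2] at H
              have hlen : (if (j : ℕ) = 2 + 1 then s j ++ [xx] else xx :: s j).length
                  = (s j).length + 1 := by split <;> simp
              omega
            · rw [if_neg (fun hh => hj2 hh.symm), if_neg (fun hh => hj1 hh.symm)]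
              rw [if_neg hj1, if_neg hj2] at H
              omega

end S16g


namespace S16h
open S16 S16b S16c S16d S16e S16f S16g

lemma wt_eq_counts (a b c : ℕ) (w : List (Fin 3)) :
    wt a b c w = a * w.countP (fun d => decide (d = (0 : Fin 3)))
      + b * w.countP (fun d => decide (d = (1 : Fin 3)))
      + c * w.countP (fun d => decide (d = (2 : Fin 3))) := by
  induction w with
  | nil => simp [wt]
  | cons d t ih =>
      have h : wt a b c (d :: t) = ![a, b, c] d + wt a b c t := by simp [wt]
      rw [h, ih]
      fin_cases d <;> simp [List.countP_cons] <;> ring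

lemma counts_of_gen {n : ℕ} {w : List (Fin 3)} {out : List ℕ}
    (h : act w (some (initConf n 2)) = some (finalConf 2 out)) :
    w.countP (fun d => decide (d = (0 : Fin 3))) = n
      ∧ w.countP (fun d => decide (d = (1 : Fin 3))) = n
      ∧ w.countP (fun d => decide (d = (2 : Fin 3))) = n := by
  have J0 := act_length w _ _ h 0
  have J1 := act_length w _ _ h 1
  have J2 := act_length w _ _ h 2
  have e00 : (initConf n 2) 0 = List.range' 1 n := by simp [initConf]
  have e01 : (initConf n 2) 1 = [] := by simp [initConf]
  have e02 : (initConf n 2) 2 = [] := by simp [initConf]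
  have f00 : (finalConf 2 out) 0 = [] := by simp [finalConf]
  have f01 : (finalConf 2 out) 1 = [] := by simp [finalConf]
  have f02 : (finalConf 2 out) 2 = [] := by simp [finalConf]
  rw [e00, f00] at J0
  rw [e01, f01] at J1
  rw [e02, f02] at J2
  have z0 : w.countP (fun x => decide (Fin.succ x = (0 : Fin 4))) = 0 :=
    List.countP_eq_zero.mpr (fun x _ => by simp [Fin.succ_ne_zero])
  have c0 : w.countP (fun x => decide (Fin.castSucc x = (0 : Fin 4)))
      = w.countP (fun d => decide (d = (0 : Fin 3))) :=
    List.countP_congr (fun x _ => by fin_cases x <;> rfl)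
  have s1 : w.countP (fun x => decide (Fin.succ x = (1 : Fin 4)))
      = w.countP (fun d => decide (d = (0 : Fin 3))) :=
    List.countP_congr (fun x _ => by fin_cases x <;> rfl)
  have c1 : w.countP (fun x => decide (Fin.castSucc x = (1 : Fin 4)))
      = w.countP (fun d => decide (d = (1 : Fin 3))) :=
    List.countP_congr (fun x _ => by fin_cases x <;> rfl)
  have s2 : w.countP (fun x => decide (Fin.succ x = (2 : Fin 4)))
      = w.countP (fun d => decide (d = (1 : Fin 3))) :=
    List.countP_congr (fun x _ => by fin_cases x <;> rfl)
  have c2 : w.countP (fun x => decide (Fin.castSucc x = (2 : Fin 4)))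
      = w.countP (fun d => decide (d = (2 : Fin 3))) :=
    List.countP_congr (fun x _ => by fin_cases x <;> rfl)
  rw [z0, c0] at J0
  rw [s1, c1] at J1
  rw [s2, c2] at J2
  simp [List.length_range'] at J0 J1 J2
  omega

lemma gen_word_weight (a b c : ℕ) {n : ℕ} {w : List (Fin 3)} {out : List ℕ}
    (h : act w (some (initConf n 2)) = some (finalConf 2 out)) :
    wt a b c w = n * (a + b + c) := by
  obtain ⟨h0, h1, h2⟩ := counts_of_gen h
  rw [wt_eq_counts, h0, h1, h2]
  ring

end S16h

namespace S16i
open S16 S16b S16c S16d S16e S16f S16g S16h PowerSeries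

noncomputable def Vps (a b c : ℕ) : PowerSeries ℤ := PowerSeries.mk (fun m => (Nc a b c m : ℤ))

lemma A_mul_V (a b c : ℕ) (h₁ : 0 < a) (h₂ : 0 < b) (h₃ : 0 < c) :
    ((1 - X ^ a - X ^ b - X ^ c + X ^ (a + c) + 2 * X ^ (a + 2 * b + c) : PowerSeries ℤ))
      * Vps a b c = 1 := by
  have expand : ((1 - X ^ a - X ^ b - X ^ c + X ^ (a + c)
        + 2 * X ^ (a + 2 * b + c) : PowerSeries ℤ)) * Vps a b c
      = Vps a b c - Vps a b c * X ^ a - Vps a b c * X ^ b - Vps a b c * X ^ c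
        + Vps a b c * X ^ (a + c)
        + (Vps a b c * X ^ (a + 2 * b + c) + Vps a b c * X ^ (a + 2 * b + c)) := by
    ring
  rw [expand]
  ext m
  simp only [map_add, map_sub, PowerSeries.coeff_mul_X_pow', Vps, PowerSeries.coeff_mk,
    PowerSeries.coeff_one]
  by_cases hm : m = 0
  · subst hm
    rw [if_pos rfl, if_neg (by omega), if_neg (by omega), if_neg (by omega),
      if_neg (by omega), if_neg (by omega), Nc_zero a b c h₁ h₂ h₃]
    ring
  · rw [if_neg hm]
    have hrec := Nc_rec a b c h₁ h₂ h₃ m (by omega)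
    rw [hrec]
    ring

lemma U_eq_V (a b c : ℕ) (h₁ : 0 < a) (h₂ : 0 < b) (h₃ : 0 < c) (U : PowerSeries ℤ)
    (hU : ((1 - X ^ a - X ^ b - X ^ c + X ^ (a + c)
        + 2 * X ^ (a + 2 * b + c) : PowerSeries ℤ)) * U = 1) :
    U = Vps a b c := by
  have hV := A_mul_V a b c h₁ h₂ h₃
  have h2 : U * (((1 - X ^ a - X ^ b - X ^ c + X ^ (a + c)
        + 2 * X ^ (a + 2 * b + c) : PowerSeries ℤ)) * Vps a b c)
      = (((1 - X ^ a - X ^ b - X ^ c + X ^ (a + c)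
        + 2 * X ^ (a + 2 * b + c) : PowerSeries ℤ)) * U) * Vps a b c := by
    ring
  rw [hV, hU, mul_one, one_mul] at h2
  exact h2

end S16i

/-- For all positive integers `α₁, α₂, α₃` and all `n ≥ 0`,
`|P(n,2)|` is at most the coefficient of `x^{n(α₁+α₂+α₃)}` in the inverse of the
power series `1 − x^{α₁} − x^{α₂} − x^{α₃} + x^{α₁+α₃} + 2x^{α₁+2α₂+α₃}` over `ℤ`
(the inverse `U` is unique when it exists, so we quantify over it). -/
theorem card_genPerms_two_le_weighted_coeff (α₁ α₂ α₃ : ℕ)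
    (h₁ : 0 < α₁) (h₂ : 0 < α₂) (h₃ : 0 < α₃) (n : ℕ) (U : PowerSeries ℤ)
    (hU : (1 - PowerSeries.X ^ α₁ - PowerSeries.X ^ α₂ - PowerSeries.X ^ α₃
            + PowerSeries.X ^ (α₁ + α₃)
            + 2 * PowerSeries.X ^ (α₁ + 2 * α₂ + α₃) : PowerSeries ℤ) * U = 1) :
    ((GenPerms n 2).ncard : ℤ) ≤ PowerSeries.coeff (n * (α₁ + α₂ + α₃)) U := by
  classical
  have hUV := S16i.U_eq_V α₁ α₂ α₃ h₁ h₂ h₃ U hU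
  rw [hUV]
  simp only [S16i.Vps, PowerSeries.coeff_mk]
  have key : ∀ π : Equiv.Perm (Fin n), Generates n 2 π →
      ∃ w : List (Fin 3), (S16.Avoids w ∧ S16c.wt α₁ α₂ α₃ w = n * (α₁ + α₂ + α₃)) ∧
        act w (some (initConf n 2))
          = some (finalConf 2 (List.ofFn fun j => ((π j : ℕ) + 1))) := by
    intro π hπ
    obtain ⟨w₀, h₀⟩ := hπ
    obtain ⟨w', hA', hwt', hact'⟩ := S16g.exists_normal w₀
    refine ⟨w', ⟨hA', ?_⟩, ?_⟩
    · rw [hwt' α₁ α₂ α₃]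
      exact S16h.gen_word_weight α₁ α₂ α₃ h₀
    · rw [← hact' (initConf n 2)]
      exact h₀
  set F : Equiv.Perm (Fin n) → List (Fin 3) :=
    fun π => if h : Generates n 2 π then (key π h).choose else [] with hF
  have hmap : ∀ π ∈ GenPerms n 2, F π ∈ S16c.AW α₁ α₂ α₃ (n * (α₁ + α₂ + α₃)) := by
    intro π hπ
    have hgen : Generates n 2 π := hπ
    show (if h : Generates n 2 π then (key π h).choose else []) ∈ _
    rw [dif_pos hgen]
    exact (key π hgen).choose_spec.1
  have hinj : Set.InjOn F (GenPerms n 2) := by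
    intro π₁ h1 π₂ h2 heq
    have hg1 : Generates n 2 π₁ := h1
    have hg2 : Generates n 2 π₂ := h2
    have heq' : (key π₁ hg1).choose = (key π₂ hg2).choose := by
      have : F π₁ = F π₂ := heq
      rw [hF] at this
      simp only [] at this
      rwa [dif_pos hg1, dif_pos hg2] at this
    have e1 := (key π₁ hg1).choose_spec.2
    have e2 := (key π₂ hg2).choose_spec.2
    rw [heq', e2] at e1
    have e3 := Option.some.inj e1
    have e4 := congrFun e3 3
    simp only [finalConf] at e4
    rw [if_pos (by decide : ((3 : Fin 4) : ℕ) = 2 + 1),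
      if_pos (by decide : ((3 : Fin 4) : ℕ) = 2 + 1)] at e4
    have e5 := List.ofFn_injective e4
    ext j
    have e6 := congrFun e5 j
    have : (π₂ j : ℕ) = (π₁ j : ℕ) := by omega
    rw [show π₂ j = π₁ j from Fin.ext this]
  have hle := Set.ncard_le_ncard_of_injOn F hmap hinj
    (S16c.AW_finite α₁ α₂ α₃ h₁ h₂ h₃ (n * (α₁ + α₂ + α₃)))
  exact_mod_cast hle
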